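/- arXiv:0812.1729 — 2 statements merged into one kernel-verified Lean document; each statement's English description precedes it below -/
import Mathlib

section
/- Let A be a deterministic parity tree automaton over a finite nonempty alphabet Σ and let p be a productive state of A (p occurs in some accepting run of A). Then there exist a state q, a path in A from p to q, and two paths from q to q, each of which is an accepting loop, that are branching: there is an index i ≥ 1, at most the length of each of the two loops, such that for all j < i the j-th steps of the two loops read the same letter in the same direction, while their i-th steps read the same letter in different directions. -/
open Filter

/-- A deterministic parity tree automaton over alphabet `Alpha` with state set `Q`. -/
structure DPTA (Alpha : Type) (Q : Type) where
  init : Q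
  delta : Q → Alpha → Q × Q
  rank : Q → ℕ

namespace DPTA

variable {Alpha Q : Type}

/-- The state reached in one step from `q` reading letter `s` in direction `d`. -/
def next (M : DPTA Alpha Q) (q : Q) (s : Alpha) (d : Bool) : Q :=
  if d then (M.delta q s).2 else (M.delta q s).1

/-- The state of the run started in `q` on the tree `t` at the node `v`
(nodes are words over `{0,1}`, head = first direction from the root). -/
def runFrom (M : DPTA Alpha Q) : Q → (List Bool → Alpha) → List Bool → Q
  | q, _, [] => q
  | q, t, d :: v => runFrom M (M.next q (t []) d) (fun u => t (d :: u)) v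

/-- The state of the (unique) run of `M` on `t` at node `v`. -/
def run (M : DPTA Alpha Q) (t : List Bool → Alpha) (v : List Bool) : Q :=
  runFrom M M.init t v

/-- Parity acceptance: the largest value occurring infinitely often is even. -/
def ParityAccept (f : ℕ → ℕ) : Prop :=
  Even (sSup {r : ℕ | ∃ᶠ n in atTop, f n = r})

/-- The prefix of length `n` of an infinite path. -/
def pref (π : ℕ → Bool) (n : ℕ) : List Bool :=
  List.ofFn fun i : Fin n => π i

/-- The run of `M` on `t` started at state `q` is accepting. -/
def AcceptsFrom (M : DPTA Alpha Q) (q : Q) (t : List Bool → Alpha) : Prop :=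
  ∀ π : ℕ → Bool, ParityAccept fun n => M.rank (runFrom M q t (pref π n))

/-- The language recognised by `M`: trees with accepting run. -/
def Lang (M : DPTA Alpha Q) : Set (List Bool → Alpha) :=
  {t | M.AcceptsFrom M.init t}

/-- The state reached from `q` following a finite sequence of steps
(steps = letter together with direction). -/
def follow (M : DPTA Alpha Q) (q : Q) (steps : List (Alpha × Bool)) : Q :=
  steps.foldl (fun p s => M.next p s.1 s.2) q

/-- All states visited along a path (the starting state included). -/
def statesOn (M : DPTA Alpha Q) (q : Q) (steps : List (Alpha × Bool)) : List Q :=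
  List.scanl (fun p s => M.next p s.1 s.2) q steps

/-- The largest rank of a state visited along a path. -/
def maxRankOn (M : DPTA Alpha Q) (q : Q) (steps : List (Alpha × Bool)) : ℕ :=
  ((M.statesOn q steps).map M.rank).foldr max 0

/-- `steps` forms a loop at `q` (a path of positive length from `q` to `q`). -/
def IsLoop (M : DPTA Alpha Q) (q : Q) (steps : List (Alpha × Bool)) : Prop :=
  steps ≠ [] ∧ M.follow q steps = q

/-- `M` contains an `(i,k)`-flower: loops `lam i, …, lam k` at a common state `q`,
the largest rank on `lam j` has the parity of `j` and increases strictly with `j`. -/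
def HasFlower (M : DPTA Alpha Q) (i k : ℕ) : Prop :=
  ∃ (q : Q) (lam : ℕ → List (Alpha × Bool)),
    (∀ j, i ≤ j → j ≤ k → M.IsLoop q (lam j) ∧ M.maxRankOn q (lam j) % 2 = j % 2) ∧
    (∀ j, i ≤ j → j < k → M.maxRankOn q (lam j) < M.maxRankOn q (lam (j + 1)))

/-- `q` is reachable from the initial state. -/
def Reachable (M : DPTA Alpha Q) (q : Q) : Prop :=
  ∃ steps, M.follow M.init steps = q

/-- `q` is productive: it occurs in some accepting run of `M`. -/
def Productive (M : DPTA Alpha Q) (q : Q) : Prop :=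
  ∃ t ∈ M.Lang, ∃ v, M.run t v = q

/-- The transition from `q` reading `s` is used in some accepting run of `M`. -/
def ProductiveTrans (M : DPTA Alpha Q) (q : Q) (s : Alpha) : Prop :=
  ∃ t ∈ M.Lang, ∃ v, M.run t v = q ∧ t v = s

/-- `q` is all-rejecting: started from `q`, the automaton accepts no tree. -/
def AllRejecting (M : DPTA Alpha Q) (q : Q) : Prop :=
  ∀ t, ¬ M.AcceptsFrom q t

/-- `M` is normalized: every state is reachable, every state is productive except
possibly one all-rejecting state `⊥` with `δ(⊥,σ) = (⊥,⊥)`, and every transition is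
productive or of the form `δ(q,σ) = (⊥,⊥)`. -/
def Normalized (M : DPTA Alpha Q) : Prop :=
  (∀ q, M.Reachable q) ∧
  ∃ bot : Option Q,
    (∀ q, some q ≠ bot → M.Productive q) ∧
    (∀ q, some q = bot → M.AllRejecting q ∧ ∀ s, M.delta q s = (q, q)) ∧
    (∀ q s, M.ProductiveTrans q s ∨
      (some (M.delta q s).1 = bot ∧ some (M.delta q s).2 = bot))

end DPTA


/-!
Along every path of an accepting run the largest rank occurring infinitely often is even, so
between two late visits of the same state that enclose an occurrence of that rank the run traces
an accepting loop. On leftmost paths this yields, below every node, the root of an accepting loop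
whose first step goes left. Build a path that turns right at the root of such a loop, descends
to the root of the next one, and so on. Two of these roots carry the same state, and the segment
of the path between them is an accepting loop whose first step goes right: it branches off the
left loop at that root at its very first step.
-/

namespace List

variable {β : Type*} {f : List β → List β}

theorem isPrefix_iterate_of_le (hf : ∀ w, w <+: f w) (v : List β) {m n : ℕ} (h : m ≤ n) :
    f^[m] v <+: f^[n] v := by
  induction n, h using Nat.le_induction with
  | base => exact prefix_refl _
  | succ n _ ih => exact ih.trans (Function.iterate_succ_apply' f n v ▸ hf _)

theorem le_length_iterate (hlen : ∀ w, w.length < (f w).length) (v : List β) (n : ℕ) :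
    n ≤ (f^[n] v).length := by
  induction n with
  | zero => exact Nat.zero_le _
  | succ n ih => rw [Function.iterate_succ_apply']; exact ih.trans_lt (hlen _)

theorem exists_getElem_iterate_eq (hf : ∀ w, w <+: f w) (hlen : ∀ w, w.length < (f w).length)
    (v : List β) :
    ∃ π : ℕ → β, ∀ n k (hk : k < (f^[n] v).length), π k = (f^[n] v)[k] := by
  refine ⟨fun k => (f^[k + 1] v)[k]'(le_length_iterate hlen v (k + 1)), fun n k hk => ?_⟩
  rcases le_total n (k + 1) with h | h
  · exact ((isPrefix_iterate_of_le hf v h).getElem hk).symm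
  · exact (isPrefix_iterate_of_le hf v h).getElem _

end List

namespace DPTA

open List

variable {Alpha Q : Type}

theorem ParityAccept.exists_even_limsup {f : ℕ → ℕ} (hfin : (Set.range f).Finite)
    (h : ParityAccept f) :
    ∃ r, Even r ∧ (∃ᶠ n in atTop, f n = r) ∧ ∀ᶠ n in atTop, f n ≤ r := by
  set S := {r : ℕ | ∃ᶠ n in atTop, f n = r}
  have hSfin : S.Finite := hfin.subset fun r hr => hr.exists
  have hSne : S.Nonempty := by
    obtain ⟨r, -, hr⟩ := hfin.frequently_exists (l := atTop) (p := fun r n => f n = r) |>.mp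
      (Frequently.of_forall fun n => ⟨f n, Set.mem_range_self n, rfl⟩)
    exact ⟨r, hr⟩
  refine ⟨sSup S, h, hSne.csSup_mem hSfin, ?_⟩
  by_contra hlarge
  obtain ⟨r, -, hr⟩ := hfin.frequently_exists (p := fun r n => sSup S < r ∧ f n = r) |>.mp <|
    (not_eventually.mp hlarge).mono
    fun n hn => ⟨f n, Set.mem_range_self n, (not_le.mp hn : sSup S < f n), rfl⟩
  obtain ⟨n, hlt, rfl⟩ := hr.exists
  exact hlt.not_ge (le_csSup hSfin.bddAbove (hr.mono fun _ h => h.2))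

theorem ParityAccept.exists_even_segment [Finite Q] {s : ℕ → Q} {rank : Q → ℕ}
    (h : ParityAccept (rank ∘ s)) {e : ℕ → ℕ} (he : StrictMono e) :
    ∃ i j, i < j ∧ s (e i) = s (e j) ∧ Even ((Finset.Icc (e i) (e j)).sup (rank ∘ s)) := by
  have hfin : (Set.range (rank ∘ s)).Finite :=
    (Set.finite_range rank).subset (Set.range_comp_subset_range s rank)
  obtain ⟨r, hr, hfreq, hle⟩ := h.exists_even_limsup hfin
  obtain ⟨y, hy⟩ : ∃ y, ∃ᶠ i in atTop, s (e i) = y :=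
    frequently_exists.mp (Frequently.of_forall fun i => ⟨_, rfl⟩)
  obtain ⟨N, hN⟩ := eventually_atTop.mp hle
  obtain ⟨i, hiN, hi⟩ := frequently_atTop.mp hy N
  obtain ⟨m, hm, hmr⟩ := frequently_atTop.mp hfreq (e i)
  obtain ⟨j, hj, hjy⟩ := frequently_atTop.mp hy (max (i + 1) m)
  have hmj : m ≤ e j := (le_max_right _ _).trans (hj.trans (he.id_le j))
  refine ⟨i, j, by omega, hi.trans hjy.symm, ?_⟩
  have hsup : (Finset.Icc (e i) (e j)).sup (rank ∘ s) = r := by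
    refine le_antisymm (Finset.sup_le fun k hk => hN k ?_) ?_
    · exact (he.id_le i).trans ((Finset.mem_Icc.mp hk).1) |>.trans' hiN
    · exact hmr ▸ Finset.le_sup (f := rank ∘ s) (Finset.mem_Icc.mpr ⟨hm, hmj⟩)
  rwa [hsup]

theorem pref_succ (π : ℕ → Bool) (n : ℕ) : pref π (n + 1) = pref π n ++ [π n] := by
  rw [pref, pref, List.ofFn_succ']
  simp

theorem pref_eq_of_forall_getElem {π : ℕ → Bool} {w : List Bool}
    (h : ∀ k (hk : k < w.length), π k = w[k]) : pref π w.length = w :=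
  List.ext_getElem (by simp [pref]) fun k _ hk => by simp [pref, h k hk]

theorem pref_getD_false (v : List Bool) (c : ℕ) :
    pref (fun k => v.getD k false) (v.length + c) = v ++ replicate c false := by
  have := pref_eq_of_forall_getElem (π := fun k => v.getD k false)
    (w := v ++ replicate c false) fun k hk => by
      rw [getElem_append]
      split_ifs with hkv <;> simp [hkv]
  simpa using this

theorem runFrom_append_singleton (M : DPTA Alpha Q) (q : Q) (t : List Bool → Alpha)
    (v : List Bool) (d : Bool) :
    M.runFrom q t (v ++ [d]) = M.next (M.runFrom q t v) (t v) d := by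
  induction v generalizing q t with
  | nil => rfl
  | cons d' v ih => exact ih ..

theorem runFrom_pref_succ (M : DPTA Alpha Q) (q : Q) (t : List Bool → Alpha) (π : ℕ → Bool)
    (n : ℕ) :
    M.runFrom q t (pref π (n + 1)) =
      M.next (M.runFrom q t (pref π n)) (t (pref π n)) (π n) := by
  rw [pref_succ, runFrom_append_singleton]

theorem maxRankOn_cons (M : DPTA Alpha Q) (q : Q) (x : Alpha × Bool) (l : List (Alpha × Bool)) :
    M.maxRankOn q (x :: l) = max (M.rank q) (M.maxRankOn (M.next q x.1 x.2) l) := by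
  simp [maxRankOn, statesOn]

def stepsAlong (t : List Bool → Alpha) (π : ℕ → Bool) (a n : ℕ) : List (Alpha × Bool) :=
  (List.range' a n).map fun k => (t (pref π k), π k)

section stepsAlong

variable (M : DPTA Alpha Q) (q : Q) (t : List Bool → Alpha) (π : ℕ → Bool)

theorem stepsAlong_succ (a n : ℕ) :
    stepsAlong t π a (n + 1) = (t (pref π a), π a) :: stepsAlong t π (a + 1) n := by
  simp [stepsAlong, List.range'_succ]

theorem follow_stepsAlong (a n : ℕ) :
    M.follow (M.runFrom q t (pref π a)) (stepsAlong t π a n) =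
      M.runFrom q t (pref π (a + n)) := by
  induction n generalizing a with
  | zero => rfl
  | succ n ih =>
    rw [stepsAlong_succ, follow, foldl_cons, ← runFrom_pref_succ, ← follow, ih,
      Nat.add_right_comm, Nat.add_assoc]

theorem maxRankOn_stepsAlong (a n : ℕ) :
    M.maxRankOn (M.runFrom q t (pref π a)) (stepsAlong t π a n) =
      (Finset.Icc a (a + n)).sup fun k => M.rank (M.runFrom q t (pref π k)) := by
  induction n generalizing a with
  | zero => simp [stepsAlong, maxRankOn, statesOn]
  | succ n ih =>
    have hIcc : Finset.Icc a (a + (n + 1)) = insert a (Finset.Icc (a + 1) (a + 1 + n)) := by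
      rw [show a + 1 + n = a + (n + 1) by omega, Finset.insert_Icc_add_one_left_eq_Icc (by omega)]
    rw [stepsAlong_succ, maxRankOn_cons, ← runFrom_pref_succ, ih, hIcc, Finset.sup_insert]

end stepsAlong

def IsAcceptingLoop (M : DPTA Alpha Q) (q : Q) (l : List (Alpha × Bool)) : Prop :=
  M.IsLoop q l ∧ Even (M.maxRankOn q l)

variable {M : DPTA Alpha Q} {q : Q} {t : List Bool → Alpha}

theorem AcceptsFrom.exists_acceptingLoop_along [Finite Q] (H : M.AcceptsFrom q t)
    (π : ℕ → Bool) {e : ℕ → ℕ} (he : StrictMono e) :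
    ∃ i l, M.IsAcceptingLoop (M.runFrom q t (pref π (e i))) l ∧
      l.head? = some (t (pref π (e i)), π (e i)) := by
  obtain ⟨i, j, hij, hstate, heven⟩ :=
    ParityAccept.exists_even_segment (s := fun n => M.runFrom q t (pref π n)) (H π) he
  obtain ⟨n, hn⟩ : ∃ n, e j = e i + (n + 1) := ⟨e j - e i - 1, by have := he hij; omega⟩
  refine ⟨i, stepsAlong t π (e i) (n + 1), ⟨⟨by simp [stepsAlong_succ], ?_⟩, ?_⟩, ?_⟩
  · rw [follow_stepsAlong, ← hn, hstate]
  · rwa [maxRankOn_stepsAlong, ← hn]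
  · simp [stepsAlong_succ]

theorem AcceptsFrom.exists_acceptingLoop_left [Finite Q] (H : M.AcceptsFrom q t)
    (v : List Bool) :
    ∃ c l, M.IsAcceptingLoop (M.runFrom q t (v ++ replicate c false)) l ∧
      l.head? = some (t (v ++ replicate c false), false) := by
  obtain ⟨c, l, hl, hhead⟩ :=
    H.exists_acceptingLoop_along (fun k => v.getD k false) (strictMono_id.const_add v.length)
  rw [pref_getD_false] at hl hhead
  exact ⟨c, l, hl, by simpa using hhead⟩

theorem AcceptsFrom.exists_branching_acceptingLoops [Finite Q] (H : M.AcceptsFrom q t)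
    (v : List Bool) :
    ∃ w, v <+: w ∧ ∃ l0 l1,
      M.IsAcceptingLoop (M.runFrom q t w) l0 ∧ l0.head? = some (t w, false) ∧
      M.IsAcceptingLoop (M.runFrom q t w) l1 ∧ l1.head? = some (t w, true) := by
  choose c l0 hl0 hhead0 using H.exists_acceptingLoop_left
  set root : List Bool → List Bool := fun u => u ++ replicate (c u) false
  set branch : List Bool → List Bool := fun u => root u ++ [true]
  have hbranch : ∀ u, u <+: branch u := fun u => (prefix_append u _).trans (prefix_append _ _)
  -- `π` runs through every `branch^[n] v`, turning right just after each root of a left loop.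
  obtain ⟨π, hπ⟩ := exists_getElem_iterate_eq hbranch (fun u => by simp [branch, root]) v
  have hroot : ∀ n, pref π (root (branch^[n] v)).length = root (branch^[n] v) ∧
      π (root (branch^[n] v)).length = true := by
    intro n
    have hV := pref_eq_of_forall_getElem (hπ (n + 1))
    rw [Function.iterate_succ_apply'] at hV
    change pref π (root _ ++ [true]).length = root _ ++ [true] at hV
    rw [length_append, length_singleton, pref_succ] at hV
    obtain ⟨hpref, hdir⟩ := append_inj' hV rfl
    exact ⟨hpref, by simpa using hdir⟩
  have he : StrictMono fun n => (root (branch^[n] v)).length := by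
    refine strictMono_nat_of_lt_succ fun n => ?_
    rw [Function.iterate_succ_apply']
    exact (by simp [branch] : (root _).length < (branch _).length).trans_le
      (prefix_append _ _).length_le
  obtain ⟨i, l1, hl1, hhead1⟩ := H.exists_acceptingLoop_along π he
  rw [(hroot i).1] at hl1 hhead1
  rw [(hroot i).2] at hhead1
  exact ⟨root (branch^[i] v), (isPrefix_iterate_of_le hbranch v (Nat.zero_le i)).trans
    (prefix_append _ _), l0 _, l1, hl0 _, hhead0 _, hl1, hhead1⟩

theorem exists_follow_runFrom_eq_of_prefix (M : DPTA Alpha Q) (q : Q) (t : List Bool → Alpha)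
    {v w : List Bool} (h : v <+: w) :
    ∃ path, M.follow (M.runFrom q t v) path = M.runFrom q t w := by
  set π : ℕ → Bool := fun k => w.getD k false
  have hw : pref π w.length = w := pref_eq_of_forall_getElem fun k hk => by simp [π, hk]
  have hv : pref π v.length = v :=
    pref_eq_of_forall_getElem fun k hk => by simp [π, h.getElem hk, (hk.trans_le h.length_le)]
  refine ⟨stepsAlong t π v.length (w.length - v.length), ?_⟩
  have := M.follow_stepsAlong q t π v.length (w.length - v.length)
  rwa [hv, Nat.add_sub_cancel' h.length_le, hw] at this

end DPTA

/-- The branching index `kk` is 0-indexed: it is `i - 1` for the index `i` of the informal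
statement. -/
theorem productive_state_branching_loops_general {Alpha Q : Type}
    [Fintype Q]
    (M : DPTA Alpha Q) (p : Q) (hp : M.Productive p) :
    ∃ (q : Q) (path l0 l1 : List (Alpha × Bool)),
      M.follow p path = q ∧
      M.IsLoop q l0 ∧ Even (M.maxRankOn q l0) ∧
      M.IsLoop q l1 ∧ Even (M.maxRankOn q l1) ∧
      ∃ kk : ℕ, kk < l0.length ∧ kk < l1.length ∧
        (∀ j, j < kk → l0[j]? = l1[j]?) ∧
        ∃ s d0 d1, l0[kk]? = some (s, d0) ∧ l1[kk]? = some (s, d1) ∧ d0 ≠ d1 := by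
  obtain ⟨t, ht, v, rfl⟩ := hp
  obtain ⟨w, hvw, l0, l1, hl0, hhead0, hl1, hhead1⟩ :=
    DPTA.AcceptsFrom.exists_branching_acceptingLoops (show M.AcceptsFrom M.init t from ht) v
  obtain ⟨path, hpath⟩ := M.exists_follow_runFrom_eq_of_prefix M.init t hvw
  refine ⟨_, path, l0, l1, hpath, hl0.1, hl0.2, hl1.1, hl1.2, 0, ?_, ?_, nofun,
    t w, false, true, ?_, ?_, Bool.false_ne_true⟩
  · exact List.length_pos_iff.mpr hl0.1.1
  · exact List.length_pos_iff.mpr hl1.1.1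
  · rwa [← List.head?_eq_getElem?]
  · rwa [← List.head?_eq_getElem?]

/-- from every productive state `p` there is a path to a state `q`
carrying two branching accepting loops. The branching position is given 0-indexed by
`kk` (so the 1-indexed position `kk + 1` is at most the length of each loop). -/
theorem productive_state_branching_loops {Alpha Q : Type}
    [Fintype Alpha] [Nonempty Alpha] [Fintype Q]
    (M : DPTA Alpha Q) (p : Q) (hp : M.Productive p) :
    ∃ (q : Q) (path l0 l1 : List (Alpha × Bool)),
      M.follow p path = q ∧
      M.IsLoop q l0 ∧ Even (M.maxRankOn q l0) ∧
      M.IsLoop q l1 ∧ Even (M.maxRankOn q l1) ∧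
      ∃ kk : ℕ, kk < l0.length ∧ kk < l1.length ∧
        (∀ j, j < kk → l0[j]? = l1[j]?) ∧
        ∃ s d0 d1, l0[kk]? = some (s, d0) ∧ l1[kk]? = some (s, d1) ∧ d0 ≠ d1 :=
  productive_state_branching_loops_general M p hp
end

section
/- Let A be the deterministic parity tree automaton over Σ = {a, b, c₀, c₁} with states {s, p₀, p₁, ⊤}, initial state s, ranks rank(s) = rank(p₀) = rank(⊤) = 0 and rank(p₁) = 1, and transitions δ(s,a) = (s,p₀), δ(s,b) = δ(s,c₀) = δ(s,c₁) = (⊤,⊤), δ(p₀,c₀) = (p₀,⊤), δ(p₀,c₁) = (p₁,⊤), δ(p₀,a) = δ(p₀,b) = (⊤,⊤), δ(p₁,c₁) = (p₀,⊤), δ(p₁,a) = δ(p₁,b) = δ(p₁,c₀) = (⊤,⊤), δ(⊤,x) = (⊤,⊤) for all x ∈ Σ. Then L(A) is Π⁰₃-complete: L(A) ∈ Π⁰₃(T_Σ), and every Π⁰₃ subset of the Cantor space {0,1}^ℕ Wadge-reduces to L(A). -/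
/-! A path of the run can visit `p₁` infinitely often only if it eventually turns left forever
(a right turn outside state `s` leads to the accepting sink `⊤`), so a tree is accepted iff for
every node `v` the run along `v 0^ω` eventually avoids `p₁`: a countable intersection of `Σ⁰₂`
conditions.

Conversely, a `Σ⁰₂` set `⋃ m, C m` of Cantor space reduces continuously to the eventually-zero
sequences by emitting a `1` whenever the least `m` such that `C m` meets the current cylinder
changes. For a `Π⁰₃` set `⋂ n, S n`, the image of `x` carries the reduction of `S n`, each bit
doubled to `c₁c₁` or `c₀c₀`, along the branch `0ⁿ1 0^ω`; the run visits `p₁` infinitely often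
there iff `x ∉ S n`. -/

open Filter

/-- Wadge reducibility: `A ≤_W B` iff `A` is the preimage of `B` under a continuous map. -/
def WadgeLE {X Y : Type} [TopologicalSpace X] [TopologicalSpace Y]
    (A : Set X) (B : Set Y) : Prop :=
  ∃ φ : X → Y, Continuous φ ∧ A = φ ⁻¹' B

/-- `Σ⁰₂` sets: countable unions of closed sets. -/
def IsSigma02 {X : Type} [TopologicalSpace X] (s : Set X) : Prop :=
  ∃ f : ℕ → Set X, (∀ n, IsClosed (f n)) ∧ s = ⋃ n, f n

/-- `Π⁰₂` sets: countable intersections of open sets. -/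
def IsPi02 {X : Type} [TopologicalSpace X] (s : Set X) : Prop :=
  ∃ f : ℕ → Set X, (∀ n, IsOpen (f n)) ∧ s = ⋂ n, f n

/-- `Π⁰₃` sets: countable intersections of `Σ⁰₂` sets. -/
def IsPi03 {X : Type} [TopologicalSpace X] (s : Set X) : Prop :=
  ∃ f : ℕ → Set X, (∀ n, IsSigma02 (f n)) ∧ s = ⋂ n, f n

/-- `Σ⁰₃` sets: countable unions of `Π⁰₂` sets. -/
def IsSigma03 {X : Type} [TopologicalSpace X] (s : Set X) : Prop :=
  ∃ f : ℕ → Set X, (∀ n, IsPi02 (f n)) ∧ s = ⋃ n, f n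

/-- The four-letter alphabet `{a, b, c₀, c₁}`. -/
inductive Ab17 : Type
  | a | b | c0 | c1
  deriving DecidableEq

instance : TopologicalSpace Ab17 := ⊥
instance : DiscreteTopology Ab17 := ⟨rfl⟩

/-- The states `{s, p₀, p₁, ⊤}`. -/
inductive St17 : Type
  | s | p0 | p1 | top
  deriving DecidableEq

/-- The automaton of Statement 17 (`C_{ω^{ω·3}+1}`): `rank s = rank p₀ = rank ⊤ = 0`,
`rank p₁ = 1`, `δ(s,a) = (s,p₀)`, `δ(s,b) = δ(s,c₀) = δ(s,c₁) = (⊤,⊤)`,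
`δ(p₀,c₀) = (p₀,⊤)`, `δ(p₀,c₁) = (p₁,⊤)`, `δ(p₀,a) = δ(p₀,b) = (⊤,⊤)`,
`δ(p₁,c₁) = (p₀,⊤)`, `δ(p₁,a) = δ(p₁,b) = δ(p₁,c₀) = (⊤,⊤)`, `δ(⊤,x) = (⊤,⊤)`. -/
def M17 : DPTA Ab17 St17 where
  init := .s
  delta := fun q s =>
    match q, s with
    | .s, .a => (.s, .p0)
    | .s, _ => (.top, .top)
    | .p0, .c0 => (.p0, .top)
    | .p0, .c1 => (.p1, .top)
    | .p0, _ => (.top, .top)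
    | .p1, .c1 => (.p0, .top)
    | .p1, _ => (.top, .top)
    | .top, _ => (.top, .top)
  rank := fun q =>
    match q with
    | .p1 => 1
    | _ => 0

open Set

namespace DPTA

variable {Alpha Q : Type} (M : DPTA Alpha Q)

theorem runFrom_append (q : Q) (t : List Bool → Alpha) (v w : List Bool) :
    M.runFrom q t (v ++ w) = M.runFrom (M.runFrom q t v) (fun u => t (v ++ u)) w := by
  induction v generalizing q t with
  | nil => rfl
  | cons d v ih => exact ih _ _

theorem runFrom_snoc (q : Q) (t : List Bool → Alpha) (v : List Bool) (d : Bool) :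
    M.runFrom q t (v ++ [d]) = M.next (M.runFrom q t v) (t v) d := by
  rw [runFrom_append]
  simp [runFrom]

theorem isLocallyConstant_runFrom [TopologicalSpace Alpha] [DiscreteTopology Alpha] (q : Q)
    (v : List Bool) : IsLocallyConstant fun t : List Bool → Alpha => M.runFrom q t v := by
  induction v using List.reverseRecOn with
  | nil => exact IsLocallyConstant.const q
  | append_singleton v d ih =>
    simp only [runFrom_snoc]
    exact ih.comp₂ ((IsLocallyConstant.iff_continuous _).2 (continuous_apply v))
      fun q a => M.next q a d

theorem pref_add (π : ℕ → Bool) (m k : ℕ) :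
    pref π (m + k) = pref π m ++ pref (fun i => π (m + i)) k := by
  simp [pref, List.ofFn_add]

theorem pref_eq_replicate {π : ℕ → Bool} (h : ∀ i, π i = false) (k : ℕ) :
    pref π k = List.replicate k false := by
  simp [pref, h]

theorem pref_getD (v : List Bool) : pref (fun i => v.getD i false) v.length = v := by
  simp [pref]

theorem parityAccept_iff_of_le_one {f : ℕ → ℕ} (hf : ∀ n, f n ≤ 1) :
    ParityAccept f ↔ ∀ᶠ n in atTop, f n ≠ 1 := by
  have hle : ∀ r ∈ {r | ∃ᶠ n in atTop, f n = r}, r ≤ 1 := fun r hr =>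
    let ⟨n, hn⟩ := hr.exists
    hn ▸ hf n
  by_cases h1 : ∃ᶠ n in atTop, f n = 1
  · have hsup : sSup {r | ∃ᶠ n in atTop, f n = r} = 1 := IsGreatest.csSup_eq ⟨h1, hle⟩
    rw [ParityAccept, hsup]
    exact iff_of_false Nat.not_even_one (not_eventually.2 (h1.mono fun n hn => not_not.2 hn))
  · have h0 : ∀ᶠ n in atTop, f n = 0 :=
      (not_frequently.1 h1).mono fun n hn => by have := hf n; omega
    have hsup : sSup {r | ∃ᶠ n in atTop, f n = r} = 0 := by
      refine IsGreatest.csSup_eq ⟨h0.frequently, fun r hr => ?_⟩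
      obtain ⟨n, hnr, hn0⟩ := (hr.and_eventually h0).exists
      omega
    rw [ParityAccept, hsup]
    exact iff_of_true ⟨0, rfl⟩ (not_frequently.1 h1)

end DPTA
open DPTA

theorem M17_rank_le_one (q : St17) : M17.rank q ≤ 1 := by
  cases q <;> decide

theorem M17_rank_eq_one_iff {q : St17} : M17.rank q = 1 ↔ q = .p1 := by
  cases q <;> decide

theorem M17_next_top (x : Ab17) (d : Bool) : M17.next .top x d = .top := by
  cases x <;> cases d <;> rfl

theorem M17_next_true {q : St17} (hq : q ≠ .s) (x : Ab17) : M17.next q x true = .top := by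
  cases q <;> cases x <;> first | rfl | exact absurd rfl hq

theorem M17_next_ne_s {q : St17} (hq : q ≠ .s) (x : Ab17) (d : Bool) : M17.next q x d ≠ .s := by
  cases q <;> cases x <;> cases d <;> first | decide | exact absurd rfl hq

theorem M17_runFrom_top (t : List Bool → Ab17) (v : List Bool) : M17.runFrom .top t v = .top := by
  induction v generalizing t with
  | nil => rfl
  | cons d v ih => rw [runFrom, M17_next_top, ih]

theorem M17_runFrom_of_true_mem {q : St17} (hq : q ≠ .s) (t : List Bool → Ab17) {v : List Bool}
    (hv : true ∈ v) : M17.runFrom q t v = .top := by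
  induction v generalizing q t with
  | nil => cases hv
  | cons d v ih =>
    rw [runFrom]
    cases d
    · exact ih (M17_next_ne_s hq _ _) _ (by simpa using hv)
    · rw [M17_next_true hq, M17_runFrom_top]

theorem M17_run_append_of_true_mem {t : List Bool → Ab17} {w u : List Bool}
    (hw : M17.run t w ≠ .s) (hu : true ∈ u) : M17.run t (w ++ u) = .top := by
  rw [run, runFrom_append]
  exact M17_runFrom_of_true_mem hw _ hu

theorem M17_mem_lang_iff_forall_path (t : List Bool → Ab17) :
    t ∈ M17.Lang ↔ ∀ π, ∀ᶠ n in atTop, M17.run t (pref π n) ≠ .p1 := by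
  simp only [Lang, AcceptsFrom,
    parityAccept_iff_of_le_one fun _ => M17_rank_le_one _, ne_eq, M17_rank_eq_one_iff]
  rfl

theorem M17_mem_lang_iff (t : List Bool → Ab17) :
    t ∈ M17.Lang ↔ ∀ v, ∀ᶠ k in atTop, M17.run t (v ++ List.replicate k false) ≠ .p1 := by
  rw [M17_mem_lang_iff_forall_path]
  constructor
  · intro h v
    have hpref : ∀ k,
        pref (fun i => v.getD i false) (v.length + k) = v ++ List.replicate k false := by
      intro k
      rw [pref_add, pref_getD, pref_eq_replicate fun i => List.getD_eq_default _ _ (by omega)]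
    filter_upwards [(tendsto_add_atTop_nat v.length).eventually (h _)] with k hk
    rwa [← hpref, add_comm]
  · intro h π
    by_contra hfreq
    simp only [not_eventually, not_not] at hfreq
    obtain ⟨m, hm⟩ := hfreq.exists
    have hzero : ∀ i, π (m + i) = false := by
      intro i
      by_contra hi
      obtain ⟨n, hn, hgt⟩ := (hfreq.and_eventually (eventually_gt_atTop (m + i))).exists
      obtain ⟨l, rfl⟩ := Nat.exists_eq_add_of_le ((Nat.le_add_right m i).trans hgt.le)
      have hmem : true ∈ pref (fun j => π (m + j)) l :=
        List.mem_ofFn.2 ⟨⟨i, by omega⟩, by simpa using hi⟩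
      rw [pref_add, M17_run_append_of_true_mem (by rw [hm]; decide) hmem] at hn
      cases hn
    obtain ⟨N, hN⟩ := eventually_atTop.1 (h (pref π m))
    obtain ⟨n, hn, hge⟩ := (hfreq.and_eventually (eventually_ge_atTop (m + N))).exists
    obtain ⟨k, rfl⟩ := Nat.exists_eq_add_of_le (le_of_add_le_left hge)
    rw [pref_add, pref_eq_replicate hzero] at hn
    exact hN k (by omega) hn

theorem isPi03_setOf_forall_eventually {X ι : Type} [TopologicalSpace X] [Countable ι]
    [Nonempty ι] {P : ι → ℕ → Set X} (hP : ∀ i k, IsClosed (P i k)) :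
    IsPi03 {x | ∀ i, ∀ᶠ k in atTop, x ∈ P i k} := by
  obtain ⟨e, he⟩ := exists_surjective_nat ι
  refine ⟨fun n => {x | ∀ᶠ k in atTop, x ∈ P (e n) k},
    fun n => ⟨fun N => ⋂ k ≥ N, P (e n) k, fun N => isClosed_biInter fun k _ => hP _ _, ?_⟩, ?_⟩
  · ext x
    simp [eventually_atTop]
  · ext x
    simp only [mem_ofPred_eq, mem_iInter]
    exact he.forall

theorem M17_isPi03_lang : IsPi03 M17.Lang := by
  have hLang : M17.Lang =
      {t | ∀ v, ∀ᶠ k in atTop, t ∈ {t | M17.run t (v ++ List.replicate k false) ≠ .p1}} :=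
    Set.ext M17_mem_lang_iff
  rw [hLang]
  exact isPi03_setOf_forall_eventually fun v k =>
    ((M17.isLocallyConstant_runFrom M17.init _).isOpen_fiber _).isClosed_compl

theorem exists_eventually_eq_iff_eventually_succ_eq {α : Type*} (u : ℕ → α) :
    (∃ c, ∀ᶠ k in atTop, u k = c) ↔ ∀ᶠ k in atTop, u (k + 1) = u k := by
  constructor
  · rintro ⟨c, hc⟩
    filter_upwards [hc, (tendsto_add_atTop_nat 1).eventually hc] with k hk hk1
    rw [hk, hk1]
  · intro h
    obtain ⟨K, hK⟩ := eventually_atTop.1 h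
    refine ⟨u K, eventually_atTop.2 ⟨K, fun k hk => ?_⟩⟩
    induction k, hk using Nat.le_induction with
    | base => rfl
    | succ k hk ih => rw [hK k hk, ih]

section SigmaTwoReduction

open PiNat

variable {E : ℕ → Type*} [∀ n, TopologicalSpace (E n)] [∀ n, DiscreteTopology (E n)]

theorem IsClosed.mem_iff_forall_inter_cylinder_nonempty {s : Set (∀ n, E n)} (hs : IsClosed s)
    {x : ∀ n, E n} : x ∈ s ↔ ∀ k, (s ∩ cylinder x k).Nonempty := by
  refine ⟨fun hx k => ⟨x, hx, self_mem_cylinder x k⟩, fun h => by_contra fun hx => ?_⟩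
  obtain ⟨k, hk⟩ := exists_disjoint_cylinder hs hx
  exact (h k).not_disjoint hk

variable (C : ℕ → Set (∀ n, E n))

/-- Stage-`k` guess at the least `m` with `x ∈ C m`. For closed `C m` it stabilises iff
`x ∈ ⋃ m, C m`; the cap `k + 1` keeps it moving when no `C m` contains `x`. -/
noncomputable def guessIndex (k : ℕ) (x : ∀ n, E n) : ℕ :=
  sInf {m | m = k + 1 ∨ (C m ∩ cylinder x k).Nonempty}

theorem isLocallyConstant_guessIndex (k : ℕ) : IsLocallyConstant (guessIndex C k) := by
  refine (IsLocallyConstant.iff_exists_open _).2 fun x =>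
    ⟨cylinder x k, isOpen_cylinder E x k, self_mem_cylinder x k, fun y hy => ?_⟩
  rw [guessIndex, guessIndex, mem_cylinder_iff_eq.1 hy]

theorem eventually_guessIndex_eq_of_mem {x : ∀ n, E n} (hC : ∀ m, IsClosed (C m))
    (hx : x ∈ ⋃ m, C m) : ∃ c, ∀ᶠ k in atTop, guessIndex C k x = c := by
  classical
  have hex : ∃ m, x ∈ C m := mem_iUnion.1 hx
  have hbelow : ∀ᶠ k in atTop, ∀ m ∈ Iio (Nat.find hex), Disjoint (C m) (cylinder x k) := by
    refine (eventually_all_finite (finite_Iio _)).2 fun m hm => ?_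
    obtain ⟨k, hk⟩ := exists_disjoint_cylinder (hC m) (Nat.find_min hex hm)
    exact eventually_atTop.2 ⟨k, fun k' hk' => hk.mono_right (cylinder_anti x hk')⟩
  refine ⟨Nat.find hex, ?_⟩
  filter_upwards [hbelow, eventually_ge_atTop (Nat.find hex)] with k hk hge
  refine IsLeast.csInf_eq ⟨Or.inr ⟨x, Nat.find_spec hex, self_mem_cylinder x k⟩, fun m hm => ?_⟩
  by_contra! hlt
  rcases hm with rfl | hm
  · omega
  · exact hm.not_disjoint (hk m hlt)

theorem mem_iUnion_of_eventually_guessIndex_eq {x : ∀ n, E n} {c : ℕ} (hC : ∀ m, IsClosed (C m))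
    (h : ∀ᶠ k in atTop, guessIndex C k x = c) : x ∈ ⋃ m, C m := by
  refine mem_iUnion.2 ⟨c, (hC c).mem_iff_forall_inter_cylinder_nonempty.2 fun n => ?_⟩
  obtain ⟨k, hk, hnk⟩ := (h.and (eventually_ge_atTop (max n c))).exists
  have hmem : guessIndex C k x ∈ {m | m = k + 1 ∨ (C m ∩ cylinder x k).Nonempty} :=
    Nat.sInf_mem ⟨k + 1, Or.inl rfl⟩
  rw [hk] at hmem
  rcases hmem with hck | ⟨y, hyC, hy⟩
  · omega
  · exact ⟨y, hyC, cylinder_anti x (le_of_max_le_left hnk) hy⟩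

end SigmaTwoReduction

theorem IsSigma02.wadgeLE_eventually_false {E : ℕ → Type} [∀ n, TopologicalSpace (E n)]
    [∀ n, DiscreteTopology (E n)] {S : Set (∀ n, E n)} (hS : IsSigma02 S) :
    WadgeLE S {y : ℕ → Bool | ∀ᶠ k in atTop, y k = false} := by
  obtain ⟨C, hC, rfl⟩ := hS
  refine ⟨fun x k => decide (guessIndex C (k + 1) x ≠ guessIndex C k x),
    continuous_pi fun k => ((isLocallyConstant_guessIndex C (k + 1)).comp₂
      (isLocallyConstant_guessIndex C k) fun a b => decide (a ≠ b)).continuous, ?_⟩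
  ext x
  simp only [mem_preimage, mem_ofPred_eq, decide_eq_false_iff_not, not_not,
    ← exists_eventually_eq_iff_eventually_succ_eq fun k => guessIndex C k x]
  exact ⟨eventually_guessIndex_eq_of_mem C hC,
    fun ⟨_, hc⟩ => mem_iUnion_of_eventually_guessIndex_eq C hC hc⟩

/-- The row `y n` is written along the branch `0ⁿ1 0^*`, bit `y n i` at depths `2i` and `2i + 1`,
so that the run returns from `p₁` to `p₀` after each true bit. -/
def codingTree : (ℕ → ℕ → Bool) → List Bool → Ab17
  | _, [] => .a
  | y, false :: v => codingTree (fun n => y (n + 1)) v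
  | y, true :: v => if true ∈ v then .b else if y 0 (v.length / 2) then .c1 else .c0

def codingState (b : ℕ → Bool) (j : ℕ) : St17 :=
  if j % 2 = 1 ∧ b (j / 2) = true then .p1 else .p0

def codingRun : (ℕ → ℕ → Bool) → List Bool → St17
  | _, [] => .s
  | y, false :: v => codingRun (fun n => y (n + 1)) v
  | y, true :: v => if true ∈ v then .top else codingState (y 0) v.length

theorem codingState_ne_s (b : ℕ → Bool) (j : ℕ) : codingState b j ≠ .s := by
  unfold codingState
  split <;> decide

theorem M17_next_codingState (b : ℕ → Bool) (j : ℕ) :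
    M17.next (codingState b j) (if b (j / 2) then .c1 else .c0) false = codingState b (j + 1) := by
  obtain ⟨k, rfl | rfl⟩ := Nat.even_or_odd' j <;> cases hb : b k <;>
    simp [codingState, hb, M17, DPTA.next, Nat.mul_add_div] <;> omega

theorem M17_runFrom_codingTree_true (y : ℕ → ℕ → Bool) (v : List Bool) :
    M17.runFrom .p0 (fun u => codingTree y (true :: u)) v =
      if true ∈ v then .top else codingState (y 0) v.length := by
  induction v using List.reverseRecOn with
  | nil => rfl
  | append_singleton v d ih =>
    rw [runFrom_snoc, ih]
    by_cases hv : true ∈ v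
    · simp [hv, M17_next_top]
    · cases d
      · simpa [hv, codingTree] using M17_next_codingState (y 0) v.length
      · simp [hv, M17_next_true (codingState_ne_s _ _)]

theorem M17_run_codingTree (y : ℕ → ℕ → Bool) (v : List Bool) :
    M17.run (codingTree y) v = codingRun y v := by
  induction v generalizing y with
  | nil => rfl
  | cons d v ih =>
    cases d
    · exact ih _
    · exact M17_runFrom_codingTree_true y v

theorem codingRun_replicate (y : ℕ → ℕ → Bool) (k : ℕ) :
    codingRun y (List.replicate k false) = .s := by
  induction k generalizing y with
  | zero => rfl
  | succ k ih => exact ih _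

theorem codingRun_replicate_append_true (y : ℕ → ℕ → Bool) (n k : ℕ) :
    codingRun y (List.replicate n false ++ true :: List.replicate k false) =
      codingState (y n) k := by
  induction n generalizing y with
  | zero => simp [codingRun]
  | succ n ih => exact ih _

theorem codingRun_append_replicate_ne_p1 {y : ℕ → ℕ → Bool}
    (hy : ∀ n, ∀ᶠ k in atTop, y n k = false) (v : List Bool) :
    ∀ᶠ k in atTop, codingRun y (v ++ List.replicate k false) ≠ .p1 := by
  induction v generalizing y with
  | nil => simp [codingRun_replicate]
  | cons d v ih =>
    cases d
    · exact ih fun n => hy (n + 1)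
    · obtain ⟨K, hK⟩ := eventually_atTop.1 (hy 0)
      filter_upwards [eventually_ge_atTop (2 * K)] with k hk
      simp only [List.cons_append, codingRun, codingState]
      split_ifs <;> simp_all [hK _ (by omega : K ≤ (v.length + k) / 2)]

theorem codingTree_mem_lang_iff (y : ℕ → ℕ → Bool) :
    codingTree y ∈ M17.Lang ↔ ∀ n, ∀ᶠ k in atTop, y n k = false := by
  simp only [M17_mem_lang_iff, M17_run_codingTree]
  refine ⟨fun h n => ?_, fun hy v => codingRun_append_replicate_ne_p1 hy v⟩
  have hn := h (List.replicate n false ++ [true])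
  simp only [List.append_assoc, List.singleton_append, codingRun_replicate_append_true] at hn
  obtain ⟨K, hK⟩ := eventually_atTop.1 hn
  filter_upwards [eventually_ge_atTop K] with k hk
  simpa [codingState, Nat.add_mod, Nat.add_div] using hK (2 * k + 1) (by omega)

theorem continuous_codingTree : Continuous codingTree := by
  refine continuous_pi fun v => ?_
  induction v with
  | nil => exact continuous_const
  | cons d v ih =>
    cases d
    · exact ih.comp (continuous_pi fun n => continuous_apply (n + 1))
    · by_cases hv : true ∈ v
      · simp only [codingTree, hv, if_true]
        exact continuous_const
      · simp only [codingTree, hv, if_false]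
        exact (continuous_of_discreteTopology
          (f := fun b : Bool => if b then Ab17.c1 else .c0)).comp
            (continuous_apply_apply (ρ := fun _ _ => Bool) 0 (v.length / 2))

/-- `L(M17)` is `Π⁰₃`-complete. -/
theorem M17_pi03_complete :
    IsPi03 M17.Lang ∧ ∀ A : Set (ℕ → Bool), IsPi03 A → WadgeLE A M17.Lang := by
  refine ⟨M17_isPi03_lang, fun A hA => ?_⟩
  obtain ⟨S, hS, rfl⟩ := hA
  choose f hf hfS using fun n => (hS n).wadgeLE_eventually_false
  refine ⟨fun x => codingTree fun n => f n x, continuous_codingTree.comp (continuous_pi hf), ?_⟩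
  ext x
  simp only [mem_iInter, mem_preimage, codingTree_mem_lang_iff]
  exact forall_congr' fun n => by rw [hfS n]; rfl
end
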